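/- arXiv:2009.07066 — 4 statements merged into one kernel-verified Lean document; each statement's English description precedes it below -/
import Mathlib

section
/- For every real number q ≥ 1, one has 1 + q^{q+1} ≤ (2q)^q, or equivalently (1 + q^{q+1})^{1/q} ≤ 2q. -/
/-- For every real `q ≥ 1`, `1 + q^{q+1} ≤ (2q)^q`, or equivalently
`(1 + q^{q+1})^{1/q} ≤ 2q` (real powers). -/
theorem stmt_2 (q : ℝ) (hq : 1 ≤ q) :
    1 + q ^ (q + 1) ≤ (2 * q) ^ q ∧ (1 + q ^ (q + 1)) ^ (1 / q) ≤ 2 * q := by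
  have hq0 : (0 : ℝ) < q := lt_of_lt_of_le one_pos hq
  have hqq : (1 : ℝ) ≤ q ^ q := Real.one_le_rpow hq hq0.le
  -- Bernoulli: 1 + q ≤ 2^q
  have hb : 1 + q ≤ (2 : ℝ) ^ q := by
    have := one_add_mul_self_le_rpow_one_add (by norm_num : (-1:ℝ) ≤ 1) hq
    norm_num at this; linarith
  have h1 : 1 + q ^ (q + 1) ≤ (2 * q) ^ q := by
    rw [Real.mul_rpow (by norm_num) hq0.le, Real.rpow_add hq0 q 1, Real.rpow_one]
    calc 1 + q ^ q * q ≤ q ^ q + q ^ q * q := by linarith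
      _ = (1 + q) * q ^ q := by ring
      _ ≤ 2 ^ q * q ^ q := by
          apply mul_le_mul_of_nonneg_right hb (by linarith)
  refine ⟨h1, ?_⟩
  have hpos : (0:ℝ) ≤ 1 + q ^ (q + 1) := by positivity
  calc (1 + q ^ (q + 1)) ^ (1 / q) ≤ ((2 * q) ^ q) ^ (1 / q) :=
        Real.rpow_le_rpow hpos h1 (by positivity)
    _ = 2 * q := by
        rw [← Real.rpow_mul (by positivity), mul_one_div_cancel hq0.ne', Real.rpow_one]
end

section
/- Let 0 < R < ∞, 0 ≤ r ≤ R, let E ⊆ [0, r] be a Lebesgue measurable set with mes E > 0, let q ≥ 1 be a real number, and let x ∈ [0, R]. Then ∫_E (ln(2R/|t − x|))^q dt ≤ (1 + q^{q+1}) · (mes E) · (ln(4R/mes E))^q. -/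
open Real

lemma quart_le_exp {x : ℝ} (hx : 0 ≤ x) : (1 + x/4)^4 ≤ Real.exp x := by
  have h1 : 1 + x/4 ≤ Real.exp (x/4) := by linarith [Real.add_one_le_exp (x/4)]
  calc (1 + x/4)^4 ≤ (Real.exp (x/4))^4 := by
        apply pow_le_pow_left₀ (by linarith) h1
    _ = Real.exp x := by rw [← Real.exp_nat_mul]; ring_nf

lemma quart_le_exp_neg {x : ℝ} (hx : 0 ≤ x) (hx4 : x ≤ 4) : (1 - x/4)^4 ≤ Real.exp (-x) := by
  have h1 : 1 - x/4 ≤ Real.exp (-(x/4)) := by linarith [Real.add_one_le_exp (-(x/4))]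
  calc (1 - x/4)^4 ≤ (Real.exp (-(x/4)))^4 := by
        apply pow_le_pow_left₀ (by linarith) h1
    _ = Real.exp (-x) := by rw [← Real.exp_nat_mul]; ring_nf

lemma step_ineq {q l u : ℝ} (h1 : 1 ≤ l) (hl : l ≤ q) (hu : q ≤ u) (huu : u*(u-1) ≤ 4)
    (hnum : 2.58 ≤ (l + (1 - u*(u-1)/4)^4) * (1 + l * 0.3068528/4)^4) :
    2.58 * Real.exp (q * (Real.log 2 - 1)) ≤ Real.exp (-(q * Real.log q)) + q := by
  have hq1 : (1:ℝ) ≤ q := le_trans h1 hl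
  have hu1 : (1:ℝ) ≤ u := le_trans hq1 hu
  have hlogq : Real.log q ≤ q - 1 := Real.log_le_sub_one_of_pos (by linarith)
  have hlogq0 : 0 ≤ Real.log q := Real.log_nonneg hq1
  have hs : q * Real.log q ≤ u*(u-1) := by nlinarith
  have huu0 : 0 ≤ u*(u-1) := by nlinarith
  have hE2 : (1 - u*(u-1)/4)^4 ≤ Real.exp (-(q * Real.log q)) := by
    calc (1 - u*(u-1)/4)^4 ≤ Real.exp (-(u*(u-1))) := quart_le_exp_neg huu0 huu
      _ ≤ Real.exp (-(q * Real.log q)) := Real.exp_le_exp.mpr (by linarith)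
  have hlog2 : Real.log 2 - 1 ≤ -0.3068528 := by
    have := Real.log_two_lt_d9; norm_num at this ⊢; linarith
  have harg : q * (Real.log 2 - 1) ≤ -(0.3068528 * l) := by nlinarith
  have hc : (0:ℝ) < (1 + l * 0.3068528/4)^4 := by positivity
  have hE1 : Real.exp (q * (Real.log 2 - 1)) ≤ ((1 + l * 0.3068528/4)^4)⁻¹ := by
    calc Real.exp (q * (Real.log 2 - 1)) ≤ Real.exp (-(0.3068528 * l)) :=
          Real.exp_le_exp.mpr harg
      _ = (Real.exp (0.3068528 * l))⁻¹ := by rw [Real.exp_neg]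
      _ ≤ ((1 + l * 0.3068528/4)^4)⁻¹ := by
          apply inv_anti₀ hc
          have := quart_le_exp (x := 0.3068528 * l) (by nlinarith)
          calc (1 + l * 0.3068528/4)^4 = (1 + (0.3068528 * l)/4)^4 := by ring_nf
            _ ≤ Real.exp (0.3068528 * l) := this
  have h258 : 2.58 * Real.exp (q * (Real.log 2 - 1)) ≤ l + (1 - u*(u-1)/4)^4 := by
    calc 2.58 * Real.exp (q * (Real.log 2 - 1)) ≤ 2.58 * ((1 + l * 0.3068528/4)^4)⁻¹ := by
          apply mul_le_mul_of_nonneg_left hE1 (by norm_num)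
      _ ≤ l + (1 - u*(u-1)/4)^4 := by
          rw [mul_inv_le_iff₀ hc]; linarith [hnum]
  linarith

lemma scalar_ineq {q : ℝ} (hq : 1 ≤ q) :
    2.58 * Real.exp (q * (Real.log 2 - 1)) * Real.exp (q * Real.log q) ≤
      1 + q * Real.exp (q * Real.log q) := by
  have hexps : 0 < Real.exp (q * Real.log q) := Real.exp_pos _
  by_cases h17 : q ≤ 1.7
  · have key : 2.58 * Real.exp (q * (Real.log 2 - 1)) ≤ Real.exp (-(q * Real.log q)) + q := by
      rcases le_total q 1.05 with h|h
      · exact step_ineq le_rfl hq h (by norm_num) (by norm_num)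
      rcases le_total q 1.1 with h2|h2
      · exact step_ineq (by norm_num) h h2 (by norm_num) (by norm_num)
      rcases le_total q 1.2 with h3|h3
      · exact step_ineq (by norm_num) h2 h3 (by norm_num) (by norm_num)
      rcases le_total q 1.3 with h4|h4
      · exact step_ineq (by norm_num) h3 h4 (by norm_num) (by norm_num)
      rcases le_total q 1.4 with h5|h5
      · exact step_ineq (by norm_num) h4 h5 (by norm_num) (by norm_num)
      rcases le_total q 1.5 with h6|h6
      · exact step_ineq (by norm_num) h5 h6 (by norm_num) (by norm_num)
      rcases le_total q 1.6 with h7|h7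
      · exact step_ineq (by norm_num) h6 h7 (by norm_num) (by norm_num)
      · exact step_ineq (by norm_num) h7 h17 (by norm_num) (by norm_num)
    have h2 := mul_le_mul_of_nonneg_right key (le_of_lt hexps)
    have h3 : Real.exp (-(q * Real.log q)) * Real.exp (q * Real.log q) = 1 := by
      rw [← Real.exp_add]; simp
    nlinarith
  · push_neg at h17
    have hc : (0:ℝ) < (1 + 1.7 * 0.3068528/4)^4 := by positivity
    have hlog2 : Real.log 2 - 1 ≤ -0.3068528 := by
      have := Real.log_two_lt_d9; norm_num at this ⊢; linarith
    have harg : q * (Real.log 2 - 1) ≤ -(0.3068528 * 1.7) := by nlinarith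
    have hE1 : Real.exp (q * (Real.log 2 - 1)) ≤ ((1 + 1.7 * 0.3068528/4)^4)⁻¹ := by
      calc Real.exp (q * (Real.log 2 - 1)) ≤ Real.exp (-(0.3068528 * 1.7)) :=
            Real.exp_le_exp.mpr harg
        _ = (Real.exp (0.3068528 * 1.7))⁻¹ := by rw [Real.exp_neg]
        _ ≤ ((1 + 1.7 * 0.3068528/4)^4)⁻¹ := by
            apply inv_anti₀ hc
            have := quart_le_exp (x := 0.3068528 * 1.7) (by norm_num)
            calc (1 + 1.7 * 0.3068528/4)^4 = (1 + (0.3068528 * 1.7)/4)^4 := by ring_nf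
              _ ≤ Real.exp (0.3068528 * 1.7) := this
    have key : 2.58 * Real.exp (q * (Real.log 2 - 1)) ≤ q := by
      calc 2.58 * Real.exp (q * (Real.log 2 - 1)) ≤ 2.58 * ((1 + 1.7 * 0.3068528/4)^4)⁻¹ := by
            apply mul_le_mul_of_nonneg_left hE1 (by norm_num)
        _ ≤ 1.7 := by rw [mul_inv_le_iff₀ hc]; norm_num
        _ ≤ q := le_of_lt h17
    nlinarith
open MeasureTheory Real

lemma half_integral_right (c δ CC β : ℝ) (hδ : 0 < δ) (hβ0 : 0 < β) (hβ1 : β < 1)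
    (hCC : 0 ≤ CC) :
    ∫⁻ t in Set.Ioc c (c+δ), ENNReal.ofReal (CC * (t - c) ^ (-β)) =
      ENNReal.ofReal (CC * (δ ^ (1-β) / (1-β))) := by
  have hβ' : (-1:ℝ) < -β := by linarith
  have hii : IntervalIntegrable (fun u : ℝ => u ^ (-β)) volume 0 δ :=
    intervalIntegral.intervalIntegrable_rpow' hβ'
  have hii2 : IntervalIntegrable (fun t : ℝ => (t - c) ^ (-β)) volume c (c+δ) := by
    simpa [add_comm] using hii.comp_sub_right c
  have hii3 : IntervalIntegrable (fun t : ℝ => CC * (t - c) ^ (-β)) volume c (c+δ) :=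
    hii2.const_mul CC
  have hint : IntegrableOn (fun t : ℝ => CC * (t - c) ^ (-β)) (Set.Ioc c (c+δ)) volume :=
    (intervalIntegrable_iff_integrableOn_Ioc_of_le (by linarith)).mp hii3
  have hnn : 0 ≤ᵐ[volume.restrict (Set.Ioc c (c+δ))] fun t : ℝ => CC * (t - c) ^ (-β) := by
    filter_upwards [ae_restrict_mem measurableSet_Ioc] with t ht
    exact mul_nonneg hCC (Real.rpow_nonneg (by linarith [ht.1]) _)
  rw [← MeasureTheory.ofReal_integral_eq_lintegral_ofReal hint hnn]
  congr 1
  rw [← intervalIntegral.integral_of_le (by linarith : c ≤ c + δ)]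
  rw [intervalIntegral.integral_const_mul]
  congr 1
  have := intervalIntegral.integral_comp_sub_right (a := c) (b := c + δ)
    (fun u : ℝ => u ^ (-β)) c
  simp only [sub_self, add_sub_cancel_left] at this
  rw [this, integral_rpow (Or.inl hβ')]
  rw [Real.zero_rpow (by linarith : -β + 1 ≠ 0)]
  rw [show -β + 1 = 1 - β by ring]
  ring

lemma half_integral_left (c δ CC β : ℝ) (hδ : 0 < δ) (hβ0 : 0 < β) (hβ1 : β < 1)
    (hCC : 0 ≤ CC) :
    ∫⁻ t in Set.Ioc c (c+δ), ENNReal.ofReal (CC * ((c+δ) - t) ^ (-β)) =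
      ENNReal.ofReal (CC * (δ ^ (1-β) / (1-β))) := by
  have hβ' : (-1:ℝ) < -β := by linarith
  have hii : IntervalIntegrable (fun u : ℝ => u ^ (-β)) volume 0 δ :=
    intervalIntegral.intervalIntegrable_rpow' hβ'
  have hii2 : IntervalIntegrable (fun t : ℝ => ((c+δ) - t) ^ (-β)) volume c (c+δ) := by
    have := hii.comp_sub_left (c + δ)
    have h1 : c + δ - (0:ℝ) = c + δ := by ring
    have h2 : c + δ - δ = c := by ring
    rw [h1, h2] at this
    exact this.symm
  have hii3 : IntervalIntegrable (fun t : ℝ => CC * ((c+δ) - t) ^ (-β)) volume c (c+δ) :=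
    hii2.const_mul CC
  have hint : IntegrableOn (fun t : ℝ => CC * ((c+δ) - t) ^ (-β)) (Set.Ioc c (c+δ)) volume :=
    (intervalIntegrable_iff_integrableOn_Ioc_of_le (by linarith)).mp hii3
  have hnn : 0 ≤ᵐ[volume.restrict (Set.Ioc c (c+δ))] fun t : ℝ => CC * ((c+δ) - t) ^ (-β) := by
    filter_upwards [ae_restrict_mem measurableSet_Ioc] with t ht
    exact mul_nonneg hCC (Real.rpow_nonneg (by linarith [ht.2]) _)
  rw [← MeasureTheory.ofReal_integral_eq_lintegral_ofReal hint hnn]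
  congr 1
  rw [← intervalIntegral.integral_of_le (by linarith : c ≤ c + δ)]
  rw [intervalIntegral.integral_const_mul]
  congr 1
  have := intervalIntegral.integral_comp_sub_left (a := c) (b := c + δ)
    (fun u : ℝ => u ^ (-β)) (c + δ)
  have h1 : c + δ - (c + δ) = (0:ℝ) := by ring
  have h2 : c + δ - c = δ := by ring
  rw [h1, h2] at this
  rw [this, integral_rpow (Or.inl hβ')]
  rw [Real.zero_rpow (by linarith : -β + 1 ≠ 0)]
  rw [show -β + 1 = 1 - β by ring]
  ring
open Real

lemma pointwise_bound (R m q s : ℝ) (hR : 0 < R) (hm : 0 < m) (hmR : m ≤ R) (hq : 1 ≤ q)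
    (hs0 : 0 < s) (hsδ : s < m/2) :
    Real.log (2*R/s) ^ q ≤ Real.log (4*R/m) ^ q * ((2*q)^q * Real.exp (1/2 - q)) *
      ((m/2) / s) ^ (1/(2*Real.log 4)) := by
  set L := Real.log 4 with hLdef
  set A := Real.log (4*R/m) with hAdef
  set v := Real.log ((m/2)/s) with hvdef
  have hq0 : 0 < q := by linarith
  have hL4 : L = 2 * Real.log 2 := by
    rw [hLdef, show (4:ℝ) = 2^2 by norm_num, Real.log_pow]; push_cast; ring
  have hL1 : 1.386 ≤ L := by
    rw [hL4]; linarith [Real.log_two_gt_d9]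
  have hL0 : 0 < L := by linarith
  have hAL : L ≤ A := by
    rw [hAdef, hLdef]
    apply Real.log_le_log (by norm_num)
    rw [le_div_iff₀ hm]; linarith
  have hA0 : 0 < A := by linarith
  have hds : 1 < (m/2)/s := by rw [lt_div_iff₀ hs0]; linarith
  have hv0 : 0 ≤ v := Real.log_nonneg (le_of_lt hds)
  have hsplit : Real.log (2*R/s) = A + v := by
    rw [hAdef, hvdef, ← Real.log_mul (by positivity) (by positivity)]
    congr 1
    field_simp
    ring
  have h1 : A + v ≤ A * (1 + v/L) := by
    have hvle : v ≤ A * (v/L) := by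
      rw [show A * (v/L) = v * A / L by ring, le_div_iff₀ hL0]
      nlinarith
    rw [mul_add, mul_one]
    linarith
  have hy : 0 ≤ 1 + v/L := by positivity
  have h2 : 1 + v/L ≤ 2*q * Real.exp ((1 + v/L)/(2*q) - 1) := by
    have h := Real.add_one_le_exp ((1 + v/L)/(2*q) - 1)
    have h2q : (0:ℝ) < 2*q := by linarith
    calc 1 + v/L = 2*q * ((1 + v/L)/(2*q)) := by field_simp
      _ ≤ 2*q * Real.exp ((1 + v/L)/(2*q) - 1) := by
          apply mul_le_mul_of_nonneg_left (by linarith) (le_of_lt h2q)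
  have hchain : A + v ≤ A * (2*q * Real.exp ((1 + v/L)/(2*q) - 1)) := by
    calc A + v ≤ A * (1 + v/L) := h1
      _ ≤ A * (2*q * Real.exp ((1 + v/L)/(2*q) - 1)) := by
          apply mul_le_mul_of_nonneg_left h2 (le_of_lt hA0)
  have step1 : Real.log (2*R/s) ^ q ≤ (A * (2*q * Real.exp ((1 + v/L)/(2*q) - 1))) ^ q := by
    rw [hsplit]
    exact Real.rpow_le_rpow (by linarith) hchain (le_of_lt hq0)
  refine step1.trans (le_of_eq ?_)
  rw [Real.mul_rpow (le_of_lt hA0) (by positivity),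
      Real.mul_rpow (by linarith) (le_of_lt (Real.exp_pos _))]
  have hexp_rpow : Real.exp ((1 + v/L)/(2*q) - 1) ^ q =
      Real.exp (1/2 - q) * ((m/2)/s) ^ (1/(2*L)) := by
    rw [Real.rpow_def_of_pos (Real.exp_pos _), Real.log_exp]
    have harg : ((1 + v/L)/(2*q) - 1) * q = (1/2 - q) + v * (1/(2*L)) := by
      field_simp
      ring
    rw [harg, Real.exp_add]
    congr 1
    rw [Real.rpow_def_of_pos (by linarith : (0:ℝ) < (m/2)/s), ← hvdef]
  rw [hexp_rpow]
  ring

lemma final_scalar {q : ℝ} (hq : 1 ≤ q) :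
    (2*q)^q * Real.exp (1/2 - q) / (1 - 1/(2*Real.log 4)) ≤ 1 + q^(q+1) := by
  have hq0 : (0:ℝ) < q := by linarith
  have hL4 : Real.log 4 = 2 * Real.log 2 := by
    rw [show (4:ℝ) = 2^2 by norm_num, Real.log_pow]; push_cast; ring
  have hL1 : 1.3862943606 ≤ Real.log 4 := by rw [hL4]; linarith [Real.log_two_gt_d9]
  have hβ : 1/(2*Real.log 4) ≤ 0.3606738 := by
    rw [div_le_iff₀ (by linarith)]; nlinarith
  have hβ0 : (0:ℝ) < 1/(2*Real.log 4) := by positivity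
  have h1β : (0.6393262:ℝ) ≤ 1 - 1/(2*Real.log 4) := by linarith
  have hsq : Real.exp (1/2) ^ 2 = Real.exp 1 := by
    rw [← Real.exp_nat_mul]; norm_num
  have hexphalf : Real.exp (1/2) ≤ 1.64873 := by
    nlinarith [Real.exp_one_lt_d9, Real.exp_pos (1/2:ℝ)]
  have h2q : (2*q)^q = Real.exp (q * Real.log 2) * Real.exp (q * Real.log q) := by
    rw [Real.rpow_def_of_pos (by linarith), Real.log_mul (by norm_num) (ne_of_gt hq0),
      ← Real.exp_add]
    congr 1; ring
  have hqq : q^(q+1) = q * Real.exp (q * Real.log q) := by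
    rw [Real.rpow_add hq0, Real.rpow_one, Real.rpow_def_of_pos hq0]
    ring_nf
  have hX : (2*q)^q * Real.exp (1/2 - q) =
      Real.exp (q*(Real.log 2 - 1)) * Real.exp (q*Real.log q) * Real.exp (1/2) := by
    rw [h2q, show (1/2 - q : ℝ) = -q + 1/2 by ring, Real.exp_add,
      show q*(Real.log 2 - 1) = q*Real.log 2 + -q by ring, Real.exp_add]
    ring
  rw [div_le_iff₀ (by linarith), hX, hqq]
  have hS := scalar_ineq hq
  set X := Real.exp (q*(Real.log 2 - 1)) with hXdef
  set Y := Real.exp (q*Real.log q) with hYdef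
  have hXpos : 0 < X := Real.exp_pos _
  have hYpos : 0 < Y := Real.exp_pos _
  have hP : (0:ℝ) < 1 + q*Y := by positivity
  have t1 : X*Y*Real.exp (1/2) ≤ X*Y*1.64873 := by nlinarith [mul_pos hXpos hYpos]
  have t2 : X*Y*(1.64873:ℝ) ≤ (1+q*Y)*(1.64873/2.58) := by nlinarith [hS]
  have t3 : (1.64873/2.58:ℝ) ≤ 0.6393262 := by norm_num
  have t4 : (1+q*Y)*(1.64873/2.58) ≤ (1+q*Y)*(1 - 1/(2*Real.log 4)) := by nlinarith
  linarith

/-- Lemma 4 of the paper (integral form): for `0 < R`, `0 ≤ r ≤ R`, a measurable set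
`E ⊆ [0,r]` of positive Lebesgue measure, a real `q ≥ 1` and `x ∈ [0,R]`,
`∫_E (ln(2R/|t-x|))^q dt ≤ (1 + q^{q+1}) · (mes E) · (ln(4R/mes E))^q`. -/
theorem stmt_3 (R r : ℝ) (hR : 0 < R) (hr : 0 ≤ r) (hrR : r ≤ R)
    (E : Set ℝ) (hE : E ⊆ Set.Icc 0 r) (hEm : MeasurableSet E)
    (hEpos : 0 < (volume E).toReal)
    (q : ℝ) (hq : 1 ≤ q) (x : ℝ) (hx : x ∈ Set.Icc (0 : ℝ) R) :
    ∫⁻ t in E, ENNReal.ofReal (Real.log (2 * R / |t - x|) ^ q) ≤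
      ENNReal.ofReal ((1 + q ^ (q + 1)) * (volume E).toReal *
        Real.log (4 * R / (volume E).toReal) ^ q) := by
  obtain ⟨hx0, hxR⟩ := hx
  have hq0 : (0:ℝ) < q := by linarith
  set m := (volume E).toReal with hmdef
  have hm : 0 < m := hEpos
  have hEfin : volume E ≠ ⊤ := by
    have h1 : volume E ≤ volume (Set.Icc (0:ℝ) r) := measure_mono hE
    rw [Real.volume_Icc] at h1
    exact ne_top_of_le_ne_top ENNReal.ofReal_ne_top h1
  have hvolE : volume E = ENNReal.ofReal m := (ENNReal.ofReal_toReal hEfin).symm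
  have hmr : m ≤ r := by
    have h1 : volume E ≤ volume (Set.Icc (0:ℝ) r) := measure_mono hE
    rw [Real.volume_Icc] at h1
    have := ENNReal.toReal_mono ENNReal.ofReal_ne_top h1
    rw [ENNReal.toReal_ofReal (by linarith)] at this
    simpa using this
  have hmR : m ≤ R := hmr.trans hrR
  set δ := m/2 with hδdef
  have hδ : 0 < δ := by positivity
  set L := Real.log 4 with hLdef
  have hL4 : L = 2 * Real.log 2 := by
    rw [hLdef, show (4:ℝ) = 2^2 by norm_num, Real.log_pow]; push_cast; ring
  have hL1 : 1.386 ≤ L := by rw [hL4]; linarith [Real.log_two_gt_d9]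
  set β := 1/(2*L) with hβdef
  have hβ0 : 0 < β := by rw [hβdef]; positivity
  have hβ1 : β < 1 := by
    rw [hβdef, div_lt_iff₀ (by linarith)]; linarith
  set A := Real.log (4*R/m) with hAdef
  have hAL : L ≤ A := by
    rw [hAdef, hLdef]
    apply Real.log_le_log (by norm_num)
    rw [le_div_iff₀ hm]; linarith
  have hA0 : 0 < A := by linarith
  have hAq0 : 0 ≤ A^q := Real.rpow_nonneg hA0.le q
  set B := Set.Ioo (x-δ) (x+δ) with hBdef
  have hBmeas : MeasurableSet B := measurableSet_Ioo
  have hvolB : volume B = ENNReal.ofReal m := by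
    rw [hBdef, Real.volume_Ioo]; congr 1; ring
  have hae : ∀ᵐ t : ℝ ∂volume, t ≠ x := by
    rw [ae_iff]
    have : {t : ℝ | ¬ t ≠ x} = {x} := by ext t; simp
    rw [this]
    exact Real.volume_singleton
  -- Step 1: rearrangement  ∫_E ≤ ∫_B
  have hdisjE : Disjoint (E ∩ B) (E \ B) :=
    Disjoint.mono_left Set.inter_subset_right Set.disjoint_sdiff_right
  have hdisjB : Disjoint (B ∩ E) (B \ E) :=
    Disjoint.mono_left Set.inter_subset_right Set.disjoint_sdiff_right
  have hsplitE : ∫⁻ t in E, ENNReal.ofReal (Real.log (2 * R / |t - x|) ^ q) =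
      (∫⁻ t in E ∩ B, ENNReal.ofReal (Real.log (2 * R / |t - x|) ^ q)) +
      ∫⁻ t in E \ B, ENNReal.ofReal (Real.log (2 * R / |t - x|) ^ q) := by
    rw [← lintegral_union (hEm.diff hBmeas) hdisjE, Set.inter_union_diff]
  have hsplitB : ∫⁻ t in B, ENNReal.ofReal (Real.log (2 * R / |t - x|) ^ q) =
      (∫⁻ t in B ∩ E, ENNReal.ofReal (Real.log (2 * R / |t - x|) ^ q)) +
      ∫⁻ t in B \ E, ENNReal.ofReal (Real.log (2 * R / |t - x|) ^ q) := by
    rw [← lintegral_union (hBmeas.diff hEm) hdisjB, Set.inter_union_diff]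
  have hout : ∫⁻ t in E \ B, ENNReal.ofReal (Real.log (2 * R / |t - x|) ^ q) ≤
      ENNReal.ofReal (A^q) * volume (E \ B) := by
    have hb : ∀ t ∈ E \ B, ENNReal.ofReal (Real.log (2 * R / |t - x|) ^ q) ≤
        ENNReal.ofReal (A^q) := by
      intro t ht
      obtain ⟨htE, htB⟩ := ht
      obtain ⟨ht0, htr⟩ := hE htE
      have htR : t ≤ R := htr.trans hrR
      have habs : δ ≤ |t - x| := by
        rw [hBdef, Set.mem_Ioo, not_and_or] at htB
        rcases htB with h | h
        · push_neg at h
          rw [abs_of_nonpos (by linarith)]; linarith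
        · push_neg at h
          rw [abs_of_nonneg (by linarith)]; linarith
      have habsR : |t - x| ≤ R := abs_le.mpr ⟨by linarith, by linarith⟩
      have h1 : (1:ℝ) ≤ 2*R/|t-x| := by
        rw [le_div_iff₀ (by linarith)]; linarith
      have h2 : 2*R/|t-x| ≤ 4*R/m := by
        rw [div_le_div_iff₀ (by linarith) hm]
        nlinarith
      apply ENNReal.ofReal_le_ofReal
      exact Real.rpow_le_rpow (Real.log_nonneg h1)
        (Real.log_le_log (by linarith) h2) hq0.le
    calc ∫⁻ t in E \ B, ENNReal.ofReal (Real.log (2 * R / |t - x|) ^ q)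
        ≤ ∫⁻ _ in E \ B, ENNReal.ofReal (A^q) := setLIntegral_mono' (hEm.diff hBmeas) hb
      _ = ENNReal.ofReal (A^q) * volume (E \ B) := setLIntegral_const _ _
  have hmeas_eq : volume (E \ B) = volume (B \ E) := by
    have h1 := measure_diff_add_inter (μ := volume) E hBmeas
    have h2 := measure_diff_add_inter (μ := volume) B hEm
    rw [Set.inter_comm B E] at h2
    have hEB : volume E = volume B := by rw [hvolE, hvolB]
    have hfin2 : volume (E ∩ B) ≠ ⊤ :=
      ne_top_of_le_ne_top hEfin (measure_mono Set.inter_subset_left)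
    have h3 : volume (E \ B) + volume (E ∩ B) = volume (B \ E) + volume (E ∩ B) := by
      rw [h1, h2, hEB]
    exact WithTop.add_right_cancel hfin2 h3
  have hin : ENNReal.ofReal (A^q) * volume (B \ E) ≤
      ∫⁻ t in B \ E, ENNReal.ofReal (Real.log (2 * R / |t - x|) ^ q) := by
    have hb : ∀ᵐ t ∂(volume.restrict (B \ E)), ENNReal.ofReal (A^q) ≤
        ENNReal.ofReal (Real.log (2 * R / |t - x|) ^ q) := by
      filter_upwards [ae_restrict_mem (hBmeas.diff hEm), ae_restrict_of_ae hae] with t ht htx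
      obtain ⟨htB, -⟩ := ht
      rw [hBdef, Set.mem_Ioo] at htB
      have hs0 : 0 < |t - x| := abs_pos.mpr (sub_ne_zero.mpr htx)
      have hsδ : |t - x| ≤ δ := by
        rw [abs_le]; constructor <;> [linarith [htB.1]; linarith [htB.2]]
      have h2 : 4*R/m ≤ 2*R/|t-x| := by
        rw [div_le_div_iff₀ hm hs0]
        nlinarith
      apply ENNReal.ofReal_le_ofReal
      exact Real.rpow_le_rpow hA0.le (Real.log_le_log (by positivity) h2) hq0.le
    have := lintegral_mono_ae hb
    rwa [setLIntegral_const] at this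
  have step1 : ∫⁻ t in E, ENNReal.ofReal (Real.log (2 * R / |t - x|) ^ q) ≤
      ∫⁻ t in B, ENNReal.ofReal (Real.log (2 * R / |t - x|) ^ q) := by
    rw [hsplitE, hsplitB, Set.inter_comm E B]
    gcongr ?_ + ?_
    · exact le_rfl
    · calc ∫⁻ t in E \ B, ENNReal.ofReal (Real.log (2 * R / |t - x|) ^ q)
          ≤ ENNReal.ofReal (A^q) * volume (E \ B) := hout
        _ = ENNReal.ofReal (A^q) * volume (B \ E) := by rw [hmeas_eq]
        _ ≤ _ := hin
  -- Step 2: bound on B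
  set CC := A^q * ((2*q)^q * Real.exp (1/2 - q)) * δ^β with hCCdef
  have hCC0 : 0 ≤ CC := by
    apply mul_nonneg (mul_nonneg hAq0 _) (Real.rpow_nonneg hδ.le β)
    exact mul_nonneg (Real.rpow_nonneg (by linarith) q) (Real.exp_pos _).le
  have hptB : ∀ᵐ t ∂(volume.restrict B),
      ENNReal.ofReal (Real.log (2 * R / |t - x|) ^ q) ≤
      ENNReal.ofReal (CC * |t - x| ^ (-β)) := by
    filter_upwards [ae_restrict_mem hBmeas, ae_restrict_of_ae hae] with t ht htx
    rw [hBdef, Set.mem_Ioo] at ht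
    have hs0 : 0 < |t - x| := abs_pos.mpr (sub_ne_zero.mpr htx)
    have hsδ : |t - x| < δ := abs_lt.mpr ⟨by linarith [ht.1], by linarith [ht.2]⟩
    apply ENNReal.ofReal_le_ofReal
    have hpb := pointwise_bound R m q |t - x| hR hm hmR hq hs0 (by rw [← hδdef]; exact hsδ)
    calc Real.log (2*R/|t-x|) ^ q
        ≤ A^q * ((2*q)^q * Real.exp (1/2 - q)) * ((m/2)/|t-x|) ^ (1/(2*Real.log 4)) := hpb
      _ = CC * |t - x| ^ (-β) := by
          rw [hCCdef, ← hδdef, ← hLdef, ← hβdef,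
            Real.div_rpow hδ.le (abs_nonneg _), Real.rpow_neg (abs_nonneg _)]
          ring
  have hB_half : B ⊆ Set.Ioc (x-δ) x ∪ Set.Ioc x (x+δ) := by
    intro t ht
    rw [hBdef, Set.mem_Ioo] at ht
    rcases le_total t x with h | h
    · exact Or.inl ⟨ht.1, h⟩
    · rcases eq_or_lt_of_le h with he | hlt
      · exact Or.inl ⟨ht.1, le_of_eq he.symm⟩
      · exact Or.inr ⟨hlt, le_of_lt ht.2⟩
  have hleft : ∫⁻ t in Set.Ioc (x-δ) x, ENNReal.ofReal (CC * |t - x| ^ (-β)) =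
      ENNReal.ofReal (CC * (δ^(1-β)/(1-β))) := by
    have hcongr : ∫⁻ t in Set.Ioc (x-δ) x, ENNReal.ofReal (CC * |t - x| ^ (-β)) =
        ∫⁻ t in Set.Ioc (x-δ) x, ENNReal.ofReal (CC * ((x-δ+δ) - t) ^ (-β)) := by
      apply setLIntegral_congr_fun measurableSet_Ioc
      intro t ht
      dsimp only
      rw [abs_of_nonpos (by linarith [ht.2] : t - x ≤ 0)]
      congr 3
      ring
    rw [hcongr]
    have := half_integral_left (x-δ) δ CC β hδ hβ0 hβ1 hCC0
    convert this using 3 <;> ring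
  have hright : ∫⁻ t in Set.Ioc x (x+δ), ENNReal.ofReal (CC * |t - x| ^ (-β)) =
      ENNReal.ofReal (CC * (δ^(1-β)/(1-β))) := by
    have hcongr : ∫⁻ t in Set.Ioc x (x+δ), ENNReal.ofReal (CC * |t - x| ^ (-β)) =
        ∫⁻ t in Set.Ioc x (x+δ), ENNReal.ofReal (CC * (t - x) ^ (-β)) := by
      apply setLIntegral_congr_fun measurableSet_Ioc
      intro t ht
      dsimp only
      rw [abs_of_nonneg (by linarith [ht.1] : 0 ≤ t - x)]
    rw [hcongr]
    exact half_integral_right x δ CC β hδ hβ0 hβ1 hCC0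
  have step2 : ∫⁻ t in B, ENNReal.ofReal (Real.log (2 * R / |t - x|) ^ q) ≤
      ENNReal.ofReal (2 * (CC * (δ^(1-β)/(1-β)))) := by
    calc ∫⁻ t in B, ENNReal.ofReal (Real.log (2 * R / |t - x|) ^ q)
        ≤ ∫⁻ t in B, ENNReal.ofReal (CC * |t - x| ^ (-β)) := lintegral_mono_ae hptB
      _ ≤ ∫⁻ t in Set.Ioc (x-δ) x ∪ Set.Ioc x (x+δ), ENNReal.ofReal (CC * |t - x| ^ (-β)) :=
          lintegral_mono_set hB_half
      _ ≤ (∫⁻ t in Set.Ioc (x-δ) x, ENNReal.ofReal (CC * |t - x| ^ (-β))) +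
          ∫⁻ t in Set.Ioc x (x+δ), ENNReal.ofReal (CC * |t - x| ^ (-β)) :=
          lintegral_union_le _ _ _
      _ = ENNReal.ofReal (CC * (δ^(1-β)/(1-β))) + ENNReal.ofReal (CC * (δ^(1-β)/(1-β))) := by
          rw [hleft, hright]
      _ = ENNReal.ofReal (2 * (CC * (δ^(1-β)/(1-β)))) := by
          have hnn : 0 ≤ CC * (δ^(1-β)/(1-β)) :=
            mul_nonneg hCC0 (div_nonneg (Real.rpow_nonneg hδ.le _) (by linarith))
          rw [← ENNReal.ofReal_add hnn hnn]
          congr 1; ring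
  -- Final numeric comparison
  have hfinal : 2 * (CC * (δ^(1-β)/(1-β))) ≤ (1 + q ^ (q + 1)) * m * A ^ q := by
    have hδβ : δ^β * δ^(1-β) = δ := by
      rw [← Real.rpow_add hδ, show β + (1-β) = 1 by ring, Real.rpow_one]
    have heq : 2 * (CC * (δ^(1-β)/(1-β))) =
        ((2*q)^q * Real.exp (1/2 - q) / (1-β)) * (m * A^q) := by
      have h1 : 2 * (CC * (δ^(1-β)/(1-β))) =
          2 * (A^q * ((2*q)^q * Real.exp (1/2-q)) * (δ^β * δ^(1-β)) / (1-β)) := by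
        rw [hCCdef]; ring
      rw [h1, hδβ, hδdef]; ring
    rw [heq]
    have hfs := final_scalar hq
    rw [← hLdef, ← hβdef] at hfs
    have hmA : 0 ≤ m * A^q := by positivity
    calc ((2*q)^q * Real.exp (1/2 - q) / (1-β)) * (m * A^q)
        ≤ (1 + q^(q+1)) * (m * A^q) := mul_le_mul_of_nonneg_right hfs hmA
      _ = (1 + q ^ (q + 1)) * m * A ^ q := by ring
  calc ∫⁻ t in E, ENNReal.ofReal (Real.log (2 * R / |t - x|) ^ q)
      ≤ ∫⁻ t in B, ENNReal.ofReal (Real.log (2 * R / |t - x|) ^ q) := step1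
    _ ≤ ENNReal.ofReal (2 * (CC * (δ^(1-β)/(1-β)))) := step2
    _ ≤ ENNReal.ofReal ((1 + q ^ (q + 1)) * m * A ^ q) := ENNReal.ofReal_le_ofReal hfinal
end

section
/- Let 0 < R < ∞, 0 ≤ r ≤ R, let E ⊆ [0, r] be a Lebesgue measurable set with mes E > 0, let q ≥ 1 be a real number, and let x ∈ [0, R]. Then (∫_E (ln(2R/|t − x|))^q dt)^{1/q} ≤ 2q · (mes E)^{1/q} · ln(4R/mes E). -/
open MeasureTheory
open scoped ENNReal


lemma intA (b x : ℝ) (hb : 0 ≤ b) :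
    IntervalIntegrable (fun t : ℝ => (t - x) ^ (-(1/2) : ℝ)) volume x (x + b) := by
  have h := (intervalIntegral.intervalIntegrable_rpow' (a := 0) (b := b) (r := -(1/2)) (by norm_num)).comp_sub_right x
  simpa [add_comm] using h

lemma intB (b x : ℝ) (hb : 0 ≤ b) :
    IntervalIntegrable (fun t : ℝ => (x - t) ^ (-(1/2) : ℝ)) volume (x - b) x := by
  have h := ((intervalIntegral.intervalIntegrable_rpow' (a := 0) (b := b) (r := -(1/2)) (by norm_num)).comp_sub_left x).symm
  simpa using h

lemma valA (b x : ℝ) (hb : 0 ≤ b) :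
    ∫ t in x..(x+b), (t - x) ^ (-(1/2) : ℝ) = 2 * b ^ ((1:ℝ)/2) := by
  have h := intervalIntegral.integral_comp_sub_right (a := x) (b := x + b) (fun s : ℝ => s ^ (-(1/2):ℝ)) x
  simp only [sub_self, add_sub_cancel_left] at h
  rw [h, integral_rpow (Or.inl (by norm_num)), Real.zero_rpow (by norm_num)]
  ring

lemma valB (b x : ℝ) (hb : 0 ≤ b) :
    ∫ t in (x-b)..x, (x - t) ^ (-(1/2) : ℝ) = 2 * b ^ ((1:ℝ)/2) := by
  have h := intervalIntegral.integral_comp_sub_left (a := x - b) (b := x) (fun s : ℝ => s ^ (-(1/2):ℝ)) x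
  simp only [sub_self, sub_sub_cancel] at h
  rw [h, integral_rpow (Or.inl (by norm_num)), Real.zero_rpow (by norm_num)]
  ring

lemma pieceA (b x : ℝ) (hb : 0 ≤ b) :
    ∫⁻ t in Set.Ioc x (x+b), ENNReal.ofReal (|t - x| ^ (-(1/2):ℝ)) ≤
      ENNReal.ofReal (2 * b ^ ((1:ℝ)/2)) := by
  rw [setLIntegral_congr_fun measurableSet_Ioc
    (fun t ht => by
      rw [abs_of_pos (by linarith [ht.1] : (0:ℝ) < t - x)])]
  have hint : IntegrableOn (fun t : ℝ => (t - x) ^ (-(1/2) : ℝ)) (Set.Ioc x (x+b)) volume := by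
    rw [← intervalIntegrable_iff_integrableOn_Ioc_of_le (by linarith)]
    exact intA b x hb
  rw [← ofReal_integral_eq_lintegral_ofReal hint
    (ae_restrict_of_forall_mem measurableSet_Ioc fun t ht =>
      Real.rpow_nonneg (by linarith [ht.1]) _)]
  rw [← intervalIntegral.integral_of_le (by linarith), valA b x hb]

lemma pieceB (b x : ℝ) (hb : 0 ≤ b) :
    ∫⁻ t in Set.Icc (x-b) x, ENNReal.ofReal (|t - x| ^ (-(1/2):ℝ)) ≤
      ENNReal.ofReal (2 * b ^ ((1:ℝ)/2)) := by
  rw [← Measure.restrict_congr_set Ioc_ae_eq_Icc]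
  rw [setLIntegral_congr_fun measurableSet_Ioc
    (fun t ht => by
      rw [abs_of_nonpos (by linarith [ht.2] : t - x ≤ 0), neg_sub])]
  have hint : IntegrableOn (fun t : ℝ => (x - t) ^ (-(1/2) : ℝ)) (Set.Ioc (x-b) x) volume := by
    rw [← intervalIntegrable_iff_integrableOn_Ioc_of_le (by linarith)]
    exact intB b x hb
  rw [← ofReal_integral_eq_lintegral_ofReal hint
    (ae_restrict_of_forall_mem measurableSet_Ioc fun t ht =>
      Real.rpow_nonneg (by linarith [ht.2]) _)]
  rw [← intervalIntegral.integral_of_le (by linarith), valB b x hb]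

lemma pieceAll (b x : ℝ) (hb : 0 ≤ b) :
    ∫⁻ t in Set.Icc (x-b) (x+b), ENNReal.ofReal (|t - x| ^ (-(1/2):ℝ)) ≤
      ENNReal.ofReal (4 * b ^ ((1:ℝ)/2)) := by
  have hsplit : Set.Icc (x-b) (x+b) = Set.Icc (x-b) x ∪ Set.Ioc x (x+b) := by
    rw [Set.Icc_union_Ioc_eq_Icc (by linarith) (by linarith)]
  rw [hsplit]
  calc ∫⁻ t in Set.Icc (x-b) x ∪ Set.Ioc x (x+b), ENNReal.ofReal (|t - x| ^ (-(1/2):ℝ))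
      ≤ (∫⁻ t in Set.Icc (x-b) x, ENNReal.ofReal (|t - x| ^ (-(1/2):ℝ)))
        + ∫⁻ t in Set.Ioc x (x+b), ENNReal.ofReal (|t - x| ^ (-(1/2):ℝ)) :=
        lintegral_union_le _ _ _
    _ ≤ ENNReal.ofReal (2 * b ^ ((1:ℝ)/2)) + ENNReal.ofReal (2 * b ^ ((1:ℝ)/2)) :=
        add_le_add (pieceB b x hb) (pieceA b x hb)
    _ = ENNReal.ofReal (4 * b ^ ((1:ℝ)/2)) := by
        rw [← ENNReal.ofReal_add (by positivity) (by positivity)]; ring_nf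


lemma log_le_rpow {p y : ℝ} (hp : 0 < p) (hy : 0 < y) :
    Real.log y ≤ (p / Real.exp 1) * y ^ (1/p) := by
  have hw : (0:ℝ) < y ^ (1/p) := Real.rpow_pos_of_pos hy _
  have h1 : Real.log y = p * Real.log (y ^ (1/p)) := by
    rw [Real.log_rpow hy]; field_simp
  have h2 : Real.log (y ^ (1/p)) ≤ y ^ (1/p) / Real.exp 1 := by
    have h3 : Real.log (y ^ (1/p) / Real.exp 1) ≤ y ^ (1/p) / Real.exp 1 - 1 :=
      Real.log_le_sub_one_of_pos (by positivity)
    rw [Real.log_div (ne_of_gt hw) (ne_of_gt (Real.exp_pos 1)), Real.log_exp] at h3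
    linarith
  calc Real.log y = p * Real.log (y ^ (1/p)) := h1
    _ ≤ p * (y ^ (1/p) / Real.exp 1) := by
        exact mul_le_mul_of_nonneg_left h2 (le_of_lt hp)
    _ = (p / Real.exp 1) * y ^ (1/p) := by ring

lemma pointwise_bound_s4 {q b d : ℝ} (hq : 1 ≤ q) (hb : 0 < b) (hd : 0 ≤ d) :
    (max 0 (Real.log (b / d))) ^ q ≤ (2*q/Real.exp 1)^q * (b^((1:ℝ)/2) * d ^ (-(1/2):ℝ)) := by
  have hq0 : (0:ℝ) < q := by linarith
  rcases eq_or_lt_of_le hd with h0 | hdpos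
  · rw [← h0, div_zero, Real.log_zero, max_self, Real.zero_rpow (ne_of_gt hq0),
      Real.zero_rpow (by norm_num : (-(1/2):ℝ) ≠ 0)]
    positivity
  rcases le_or_gt (b/d) 1 with hle | hgt
  · have : Real.log (b/d) ≤ 0 := Real.log_nonpos (by positivity) hle
    rw [max_eq_left this, Real.zero_rpow (ne_of_gt hq0)]
    positivity
  · have hbd : (0:ℝ) < b / d := by positivity
    have hlog : Real.log (b/d) ≤ (2*q/Real.exp 1) * (b/d) ^ (1/(2*q)) :=
      log_le_rpow (by linarith) hbd
    have hlognn : 0 ≤ Real.log (b/d) := Real.log_nonneg (le_of_lt hgt)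
    rw [max_eq_right hlognn]
    calc Real.log (b/d) ^ q ≤ ((2*q/Real.exp 1) * (b/d) ^ (1/(2*q))) ^ q :=
          Real.rpow_le_rpow hlognn hlog (le_of_lt hq0)
      _ = (2*q/Real.exp 1)^q * ((b/d) ^ (1/(2*q)))^q := by
          rw [Real.mul_rpow (by positivity) (by positivity)]
      _ = (2*q/Real.exp 1)^q * (b/d) ^ ((1:ℝ)/2) := by
          rw [← Real.rpow_mul (le_of_lt hbd)]
          have hqne : q ≠ 0 := ne_of_gt hq0
          rw [show 1/(2*q)*q = 1/2 by field_simp]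
      _ = (2*q/Real.exp 1)^q * (b^((1:ℝ)/2) * d ^ (-(1/2):ℝ)) := by
          rw [Real.div_rpow (le_of_lt hb) hd, Real.rpow_neg hd]; ring


/-- Lemma 4 of the paper (`L^q`-norm form): for `0 < R`, `0 ≤ r ≤ R`, a measurable set
`E ⊆ [0,r]` of positive Lebesgue measure, a real `q ≥ 1` and `x ∈ [0,R]`,
`(∫_E (ln(2R/|t-x|))^q dt)^{1/q} ≤ 2q · (mes E)^{1/q} · ln(4R/mes E)`. -/
theorem stmt_4 (R r : ℝ) (hR : 0 < R) (hr : 0 ≤ r) (hrR : r ≤ R)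
    (E : Set ℝ) (hE : E ⊆ Set.Icc 0 r) (hEm : MeasurableSet E)
    (hEpos : 0 < (volume E).toReal)
    (q : ℝ) (hq : 1 ≤ q) (x : ℝ) (hx : x ∈ Set.Icc (0 : ℝ) R) :
    (∫⁻ t in E, ENNReal.ofReal (Real.log (2 * R / |t - x|) ^ q)) ^ (1 / q) ≤
      ENNReal.ofReal (2 * q * (volume E).toReal ^ (1 / q) *
        Real.log (4 * R / (volume E).toReal)) := by
  have hq0 : (0:ℝ) < q := by linarith
  set m : ℝ := (volume E).toReal with hm_def
  have hm : 0 < m := hEpos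
  -- basic facts about m
  have hEfin : volume E ≠ ⊤ := by
    have h1 : volume E ≤ volume (Set.Icc (0:ℝ) r) := measure_mono hE
    rw [Real.volume_Icc] at h1
    exact ne_top_of_le_ne_top ENNReal.ofReal_ne_top h1
  have hvol : volume E = ENNReal.ofReal m := (ENNReal.ofReal_toReal hEfin).symm
  have hmR : m ≤ R := by
    have h1 : volume E ≤ volume (Set.Icc (0:ℝ) r) := measure_mono hE
    rw [Real.volume_Icc] at h1
    have := ENNReal.toReal_mono ENNReal.ofReal_ne_top h1
    rw [ENNReal.toReal_ofReal (by linarith)] at this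
    linarith
  -- e facts
  have he2 : (2:ℝ) ≤ Real.exp 1 := by
    have := Real.exp_one_gt_d9; linarith
  have he4 : Real.exp 1 ≤ 4 := by
    have := Real.exp_one_lt_d9; linarith
  have hlog4 : (1:ℝ) ≤ Real.log 4 := by
    rw [← Real.log_exp 1]
    exact Real.log_le_log (Real.exp_pos 1) he4
  set A : ℝ := Real.log (4 * R / m) with hA_def
  have hA : Real.log 4 ≤ A := by
    apply Real.log_le_log (by norm_num)
    rw [le_div_iff₀ hm]
    nlinarith
  have hApos : 0 < A := by linarith
  set c : ℝ := Real.log 4 - 1 with hc_def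
  have hc : 0 ≤ c := by simp only [hc_def]; linarith
  set b : ℝ := m * Real.exp 1 / 8 with hb_def
  have hbpos : 0 < b := by positivity
  -- log identities
  have hlogb : Real.log b = Real.log m + 1 - Real.log 8 := by
    rw [hb_def, Real.log_div (by positivity) (by norm_num),
      Real.log_mul (ne_of_gt hm) (ne_of_gt (Real.exp_pos 1)), Real.log_exp]
  have hlog8 : Real.log 8 = 3 * Real.log 2 := by
    rw [show (8:ℝ) = 2^3 by norm_num, Real.log_pow]; push_cast; ring
  have hlog4' : Real.log 4 = 2 * Real.log 2 := by
    rw [show (4:ℝ) = 2^2 by norm_num, Real.log_pow]; push_cast; ring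
  have hAeq : A = Real.log 4 + Real.log R - Real.log m := by
    rw [hA_def, Real.log_div (by positivity) (ne_of_gt hm),
      Real.log_mul (by norm_num) (ne_of_gt hR)]
  -- the decomposition functions
  set G : ℝ → ℝ≥0∞ := fun t => ENNReal.ofReal (max 0 (Real.log (b / |t - x|))) with hG_def
  have hGmeas : Measurable G := by
    apply ENNReal.measurable_ofReal.comp
    apply Measurable.max measurable_const
    exact Real.measurable_log.comp ((measurable_const.div ((measurable_id.sub measurable_const).abs)))
  -- pointwise inequality on E
  have hpt : ∀ t ∈ E, ENNReal.ofReal (Real.log (2 * R / |t - x|) ^ q) ≤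
      (ENNReal.ofReal (A + c) + G t) ^ q := by
    intro t ht
    have htI := hE ht
    have hd : |t - x| ≤ R := by
      rw [abs_le]
      constructor <;> [nlinarith [htI.1, htI.2, hx.1, hx.2]; nlinarith [htI.1, htI.2, hx.1, hx.2]]
    have hgle : Real.log (2 * R / |t - x|) ≤ (A + c) + max 0 (Real.log (b / |t - x|)) := by
      rcases eq_or_lt_of_le (abs_nonneg (t - x)) with h0 | hdpos
      · simp only [← h0, div_zero, Real.log_zero, max_self]
        linarith
      · have hid : Real.log (2 * R / |t - x|) = (A + c) + Real.log (b / |t - x|) := by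
          have hlog2 : Real.log 4 = 2 * Real.log 2 := hlog4'
          rw [Real.log_div (by positivity) (ne_of_gt hdpos),
            Real.log_div (ne_of_gt hbpos) (ne_of_gt hdpos),
            Real.log_mul (by norm_num) (ne_of_gt hR)]
          linarith [hAeq, hlogb, hlog8, hlog4', hc_def]
        rw [hid]
        have : Real.log (b / |t - x|) ≤ max 0 (Real.log (b / |t - x|)) := le_max_right _ _
        linarith
    have hgnn : 0 ≤ Real.log (2 * R / |t - x|) := by
      rcases eq_or_lt_of_le (abs_nonneg (t - x)) with h0 | hdpos
      · rw [← h0, div_zero, Real.log_zero]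
      · apply Real.log_nonneg
        rw [le_div_iff₀ hdpos]
        linarith
    calc ENNReal.ofReal (Real.log (2 * R / |t - x|) ^ q)
        = ENNReal.ofReal (Real.log (2 * R / |t - x|)) ^ q := by
          rw [ENNReal.ofReal_rpow_of_nonneg hgnn (le_of_lt hq0)]
      _ ≤ (ENNReal.ofReal ((A + c) + max 0 (Real.log (b / |t - x|)))) ^ q :=
          ENNReal.rpow_le_rpow (ENNReal.ofReal_le_ofReal hgle) (le_of_lt hq0)
      _ = (ENNReal.ofReal (A + c) + G t) ^ q := by
          rw [ENNReal.ofReal_add (by linarith) (le_max_left _ _)]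

  -- Step 1: pointwise bound inside the integral
  have step1 : (∫⁻ t in E, ENNReal.ofReal (Real.log (2 * R / |t - x|) ^ q)) ^ (1/q) ≤
      (∫⁻ t in E, (ENNReal.ofReal (A + c) + G t) ^ q) ^ (1/q) :=
    ENNReal.rpow_le_rpow (setLIntegral_mono' hEm hpt) (by positivity)
  -- Step 2: Minkowski inequality
  have step2 : (∫⁻ t in E, (ENNReal.ofReal (A + c) + G t) ^ q) ^ (1/q) ≤
      (∫⁻ t in E, (ENNReal.ofReal (A + c) : ℝ≥0∞) ^ q) ^ (1/q) +
        (∫⁻ t in E, G t ^ q) ^ (1/q) :=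
    ENNReal.lintegral_Lp_add_le aemeasurable_const hGmeas.aemeasurable hq
  -- Term 1
  have hT1 : (∫⁻ _t in E, (ENNReal.ofReal (A + c) : ℝ≥0∞) ^ q) ^ (1/q) =
      ENNReal.ofReal ((A + c) * m ^ (1/q)) := by
    rw [setLIntegral_const, ENNReal.mul_rpow_of_nonneg _ _ (by positivity),
      ← ENNReal.rpow_mul, mul_one_div_cancel (ne_of_gt hq0), ENNReal.rpow_one, hvol,
      ENNReal.ofReal_rpow_of_nonneg (le_of_lt hm) (by positivity),
      ← ENNReal.ofReal_mul (by linarith)]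
  -- Term 2
  have hT2 : (∫⁻ t in E, G t ^ q) ^ (1/q) ≤ ENNReal.ofReal (q * m ^ (1/q)) := by
    set S : ℝ → ℝ≥0∞ := fun t => ENNReal.ofReal ((max 0 (Real.log (b / |t - x|))) ^ q)
      with hS_def
    have h1 : ∫⁻ t in E, G t ^ q = ∫⁻ t in E, S t := by
      apply lintegral_congr
      intro t
      exact ENNReal.ofReal_rpow_of_nonneg (le_max_left _ _) (le_of_lt hq0)
    have hsupp : Function.support S ⊆ Set.Icc (x - b) (x + b) := by
      apply Function.support_subset_iff'.2
      intro t ht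
      have hd : b < |t - x| := by
        rcases not_and_or.1 (fun hmem => ht ⟨(by linarith [hmem.1] : x - b ≤ t),
          (by linarith [hmem.2] : t ≤ x + b)⟩ : ¬ (x - b ≤ t ∧ t ≤ x + b)) with h | h
        · push_neg at h
          rw [abs_sub_comm, abs_of_pos (by linarith)]
          linarith
        · push_neg at h
          rw [abs_of_pos (by linarith)]
          linarith
      have hlt : Real.log (b / |t - x|) < 0 := by
        apply Real.log_neg (div_pos hbpos (by linarith))
        rw [div_lt_one (by linarith)]
        exact hd
      simp only [hS_def, max_eq_left (le_of_lt hlt), Real.zero_rpow (ne_of_gt hq0),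
        ENNReal.ofReal_zero]
    have h2 : ∫⁻ t in E, S t ≤ ∫⁻ t in Set.Icc (x - b) (x + b), S t := by
      rw [setLIntegral_eq_of_support_subset hsupp]
      exact setLIntegral_le_lintegral _ _
    have h3 : ∫⁻ t in Set.Icc (x - b) (x + b), S t ≤
        ∫⁻ t in Set.Icc (x - b) (x + b),
          ENNReal.ofReal ((2*q/Real.exp 1)^q * b^((1:ℝ)/2)) *
            ENNReal.ofReal (|t - x| ^ (-(1/2):ℝ)) := by
      apply lintegral_mono
      intro t
      dsimp only
      rw [← ENNReal.ofReal_mul (by positivity)]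
      apply ENNReal.ofReal_le_ofReal
      have hpb := pointwise_bound_s4 hq hbpos (abs_nonneg (t - x))
      calc (max 0 (Real.log (b / |t - x|))) ^ q
          ≤ (2*q/Real.exp 1)^q * (b^((1:ℝ)/2) * |t - x| ^ (-(1/2):ℝ)) := hpb
        _ = (2*q/Real.exp 1)^q * b^((1:ℝ)/2) * |t - x| ^ (-(1/2):ℝ) := by ring
    have h4 : ∫⁻ t in Set.Icc (x - b) (x + b),
          ENNReal.ofReal ((2*q/Real.exp 1)^q * b^((1:ℝ)/2)) *
            ENNReal.ofReal (|t - x| ^ (-(1/2):ℝ)) ≤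
        ENNReal.ofReal ((2*q/Real.exp 1)^q * b^((1:ℝ)/2)) *
          ENNReal.ofReal (4 * b ^ ((1:ℝ)/2)) := by
      have hmeas2 : Measurable (fun t : ℝ => ENNReal.ofReal (|t - x| ^ (-(1/2):ℝ))) :=
        ENNReal.measurable_ofReal.comp
          (((measurable_id.sub measurable_const).abs).pow measurable_const)
      rw [lintegral_const_mul _ hmeas2]
      exact mul_le_mul_right (pieceAll b x (le_of_lt hbpos)) _
    have h5 : (∫⁻ t in E, G t ^ q) ≤ ENNReal.ofReal (4 * b * (2*q/Real.exp 1)^q) := by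
      rw [h1]
      refine le_trans h2 (le_trans h3 (le_trans h4 ?_))
      rw [← ENNReal.ofReal_mul (by positivity)]
      apply ENNReal.ofReal_le_ofReal
      rw [show (2*q/Real.exp 1)^q * b^((1:ℝ)/2) * (4 * b ^ ((1:ℝ)/2)) =
        4 * (b^((1:ℝ)/2) * b^((1:ℝ)/2)) * (2*q/Real.exp 1)^q by ring,
        ← Real.rpow_add hbpos]
      norm_num
    calc (∫⁻ t in E, G t ^ q) ^ (1/q)
        ≤ (ENNReal.ofReal (4 * b * (2*q/Real.exp 1)^q)) ^ (1/q) :=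
          ENNReal.rpow_le_rpow h5 (by positivity)
      _ = ENNReal.ofReal ((4 * b * (2*q/Real.exp 1)^q) ^ (1/q)) :=
          ENNReal.ofReal_rpow_of_nonneg (by positivity) (by positivity)
      _ ≤ ENNReal.ofReal (q * m ^ (1/q)) := by
          apply ENNReal.ofReal_le_ofReal
          have he2' : (1:ℝ) ≤ Real.exp 1 / 2 := by linarith
          have key : (4 * b * (2*q/Real.exp 1)^q) ^ (1/q) =
              (m * (Real.exp 1 / 2)) ^ (1/q) * (2*q/Real.exp 1) := by
            rw [Real.mul_rpow (by positivity) (by positivity),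
              ← Real.rpow_mul (by positivity), mul_one_div_cancel (ne_of_gt hq0),
              Real.rpow_one]
            congr 2
            rw [hb_def]; ring
          rw [key, Real.mul_rpow (le_of_lt hm) (by positivity)]
          have hle : (Real.exp 1 / 2) ^ ((1:ℝ)/q) ≤ Real.exp 1 / 2 := by
            nth_rewrite 2 [show Real.exp 1 / 2 = (Real.exp 1 / 2) ^ (1:ℝ) by
              rw [Real.rpow_one]]
            apply Real.rpow_le_rpow_of_exponent_le he2'
            rw [div_le_one hq0]
            exact hq
          calc m ^ ((1:ℝ)/q) * (Real.exp 1 / 2) ^ ((1:ℝ)/q) * (2*q/Real.exp 1)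
              ≤ m ^ ((1:ℝ)/q) * (Real.exp 1 / 2) * (2*q/Real.exp 1) := by
                apply mul_le_mul_of_nonneg_right _ (by positivity)
                exact mul_le_mul_of_nonneg_left hle (by positivity)
            _ = q * m ^ ((1:ℝ)/q) := by
                field_simp
  -- Combine
  refine le_trans step1 (le_trans step2 ?_)
  rw [hT1]
  calc ENNReal.ofReal ((A + c) * m ^ (1/q)) + (∫⁻ t in E, G t ^ q) ^ (1/q)
      ≤ ENNReal.ofReal ((A + c) * m ^ (1/q)) + ENNReal.ofReal (q * m ^ (1/q)) :=
        add_le_add_right hT2 _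
    _ = ENNReal.ofReal ((A + c) * m ^ (1/q) + q * m ^ (1/q)) := by
        rw [← ENNReal.ofReal_add (by positivity) (by positivity)]
    _ ≤ ENNReal.ofReal (2 * q * m ^ (1/q) * A) := by
        apply ENNReal.ofReal_le_ofReal
        have hmq : (0:ℝ) ≤ m ^ (1/q) := by positivity
        have hkey : A + c + q ≤ 2 * q * A := by
          nlinarith [mul_le_mul_of_nonneg_left hA (show (0:ℝ) ≤ 2*q - 1 by linarith),
            mul_le_mul_of_nonneg_left hlog4 (show (0:ℝ) ≤ 2*q - 2 by linarith)]
        nlinarith [mul_le_mul_of_nonneg_right hkey hmq]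
end

section
/- Let a > 0 and let f : (−a, a) → [0, +∞] be an even Lebesgue integrable function that is decreasing (non-increasing) on (0, a). Then for every Lebesgue measurable set E ⊆ (−a, a), ∫_E f dλ ≤ 2 · ∫_0^{λ(E)/2} f(t) dt. -/
open MeasureTheory
open scoped ENNReal

/-- Gol'dberg--Ostrovskii rearrangement lemma (Lemma A): if `f : (-a,a) → [0,+∞]` is an
even integrable function, non-increasing on `(0,a)`, then for every measurable
`E ⊆ (-a,a)` one has `∫_E f dλ ≤ 2 ∫_0^{λ(E)/2} f(t) dt`. -/
theorem stmt_5 (a : ℝ) (ha : 0 < a) (f : ℝ → ℝ≥0∞) (hf : Measurable f)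
    (heven : ∀ x ∈ Set.Ioo (-a) a, f (-x) = f x)
    (hdec : AntitoneOn f (Set.Ioo 0 a))
    (hint : ∫⁻ x in Set.Ioo (-a) a, f x ≠ ⊤)
    (E : Set ℝ) (hEm : MeasurableSet E) (hE : E ⊆ Set.Ioo (-a) a) :
    ∫⁻ x in E, f x ≤ 2 * ∫⁻ t in Set.Ioc (0 : ℝ) ((volume E).toReal / 2), f t := by
  show (∫⁻ x in E, f x ∂volume) ≤ 2 * ∫⁻ t in Set.Ioc (0 : ℝ) ((volume E).toReal / 2), f t ∂volume
  set m : ℝ := (volume E).toReal / 2 with hm_def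
  -- basic facts about `m`
  have hEfin : volume E ≠ ⊤ := by
    refine ne_top_of_le_ne_top ?_ (measure_mono hE)
    simp [Real.volume_Ioo]
  have hm0 : 0 ≤ m := by positivity
  have hma : m ≤ a := by
    have h1 : volume E ≤ volume (Set.Ioo (-a) a) := measure_mono hE
    rw [Real.volume_Ioo] at h1
    have h2 : (volume E).toReal ≤ a - -a := by
      refine ENNReal.toReal_le_of_le_ofReal (by linarith) h1
    rw [hm_def]; linarith
  set I : Set ℝ := Set.Ioo (-m) m with hI_def
  have hIm : MeasurableSet I := measurableSet_Ioo
  have hvolI : volume I = volume E := by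
    rw [hI_def, Real.volume_Ioo, hm_def]
    rw [show (volume E).toReal / 2 - -((volume E).toReal / 2) = (volume E).toReal by ring]
    exact ENNReal.ofReal_toReal hEfin
  -- measure of the two "difference" pieces agree
  have hdiff : volume (E \ I) = volume (I \ E) := by
    have h1 : volume (E \ I) = volume E - volume (E ∩ I) := by
      rw [← measure_diff_add_inter E hIm]
      rw [ENNReal.add_sub_cancel_right (ne_top_of_le_ne_top hEfin (measure_mono Set.inter_subset_left))]
    have h2 : volume (I \ E) = volume I - volume (E ∩ I) := by
      rw [Set.inter_comm, ← measure_diff_add_inter I hEm]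
      rw [ENNReal.add_sub_cancel_right
        (ne_top_of_le_ne_top hEfin (measure_mono (Set.inter_comm I E ▸ Set.inter_subset_left)))]
    rw [h1, h2, hvolI]
  -- Step 1 : ∫_{E\I} f ≤ ∫_{I\E} f
  have key : ∫⁻ x in E \ I, f x ∂volume ≤ ∫⁻ x in I \ E, f x ∂volume := by
    rcases eq_or_lt_of_le hma with rfl | hmlt
    · -- m = a : E ⊆ I, so the left side is zero
      have : E \ I = ∅ := by
        rw [Set.diff_eq_empty]; exact hE
      simp [this]
    rcases eq_or_lt_of_le hm0 with hm0' | hm0'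
    · -- m = 0 : both sides: E \ I has measure... E has measure 0
      have hE0 : volume E = 0 := by
        have := ENNReal.toReal_eq_zero_iff (volume E)
        have : (volume E).toReal = 0 := by rw [hm_def] at hm0'; linarith
        rcases (ENNReal.toReal_eq_zero_iff _).1 this with h | h
        · exact h
        · exact absurd h hEfin
      have : volume (E \ I) = 0 := measure_mono_null Set.diff_subset hE0
      rw [setLIntegral_measure_zero _ _ this]
      exact zero_le
    -- main case : 0 < m < a
    have hmIoo : m ∈ Set.Ioo (0 : ℝ) a := ⟨hm0', hmlt⟩
    calc ∫⁻ x in E \ I, f x ∂volume ≤ ∫⁻ _ in E \ I, f m ∂volume := by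
          refine setLIntegral_mono measurable_const ?_
          intro x hx
          rcases hx with ⟨hxE, hxI⟩
          have hxa := hE hxE
          rw [hI_def, Set.mem_Ioo, not_and_or, not_lt, not_lt] at hxI
          rcases hxI with h | h
          · -- x ≤ -m < 0
            have hx1 : -x ∈ Set.Ioo (0 : ℝ) a := ⟨by linarith, by
              have := hxa.1; linarith⟩
            have := hdec hmIoo hx1 (by linarith)
            rwa [heven x hxa] at this
          · exact hdec hmIoo ⟨by linarith, hxa.2⟩ h
      _ = f m * volume (E \ I) := setLIntegral_const _ _
      _ = f m * volume (I \ E) := by rw [hdiff]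
      _ = ∫⁻ _ in I \ E, f m ∂volume := (setLIntegral_const _ _).symm
      _ ≤ ∫⁻ x in I \ E, f x ∂volume := by
          refine setLIntegral_mono_ae' (hIm.diff hEm) ?_
          have h0 : volume ({(0:ℝ)} : Set ℝ) = 0 := measure_singleton 0
          filter_upwards [(ae_iff.2 (by simpa using h0) : ∀ᵐ x : ℝ, x ≠ 0)] with x hx0 hx
          rcases hx with ⟨hxI, -⟩
          rw [hI_def, Set.mem_Ioo] at hxI
          rcases lt_or_gt_of_ne hx0 with hneg | hpos
          · have hx1 : -x ∈ Set.Ioo (0 : ℝ) a := ⟨by linarith, by linarith⟩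
            have hxa : x ∈ Set.Ioo (-a) a := ⟨by linarith, by linarith⟩
            have := hdec hx1 hmIoo (by linarith)
            rwa [heven x hxa] at this
          · exact hdec ⟨hpos, by linarith⟩ hmIoo hxI.2.le
  -- Step 2 : combine
  have step2 : ∫⁻ x in E, f x ∂volume ≤ ∫⁻ x in I, f x ∂volume := by
    calc ∫⁻ x in E, f x ∂volume = ∫⁻ x in E ∩ I, f x ∂volume + ∫⁻ x in E \ I, f x ∂volume :=
          (lintegral_inter_add_diff f E hIm).symm
      _ ≤ ∫⁻ x in E ∩ I, f x ∂volume + ∫⁻ x in I \ E, f x ∂volume := add_le_add_right key _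
      _ = ∫⁻ x in I ∩ E, f x ∂volume + ∫⁻ x in I \ E, f x ∂volume := by rw [Set.inter_comm]
      _ = ∫⁻ x in I, f x ∂volume := lintegral_inter_add_diff f I hEm
  -- Step 3 : ∫_I f = 2 ∫_{(0,m]} f by evenness
  have hsplit : ∫⁻ x in I, f x ∂volume = ∫⁻ x in Set.Ioo (-m) 0, f x ∂volume + ∫⁻ x in Set.Ico 0 m, f x ∂volume := by
    have h1 : I ∩ Set.Ioo (-m) 0 = Set.Ioo (-m) 0 := by
      rw [Set.inter_eq_right]
      intro x hx; exact ⟨hx.1, lt_of_lt_of_le hx.2 hm0⟩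
    have h2 : I \ Set.Ioo (-m) 0 = Set.Ico 0 m := by
      ext x
      simp only [hI_def, Set.mem_diff, Set.mem_Ioo, Set.mem_Ico, not_and_or, not_lt]
      constructor
      · rintro ⟨⟨h1', h2'⟩, h3'⟩
        rcases h3' with h | h
        · constructor <;> linarith
        · constructor <;> linarith
      · rintro ⟨h1', h2'⟩
        exact ⟨⟨by linarith, h2'⟩, Or.inr h1'⟩
    rw [← lintegral_inter_add_diff f I measurableSet_Ioo, h1, h2]
  have hneg : ∫⁻ x in Set.Ioo (-m) 0, f x ∂volume = ∫⁻ x in Set.Ioo (0 : ℝ) m, f x ∂volume := by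
    have hmp : MeasurePreserving (fun x : ℝ => -x) volume volume :=
      Measure.measurePreserving_neg volume
    have hemb : MeasurableEmbedding (fun x : ℝ => -x) :=
      (Homeomorph.neg ℝ).measurableEmbedding
    have hpre : (fun x : ℝ => -x) ⁻¹' (Set.Ioo (-m) 0) = Set.Ioo (0 : ℝ) m := by
      ext x; simp only [Set.mem_preimage, Set.mem_Ioo]; constructor <;> intro h <;>
        constructor <;> linarith [h.1, h.2]
    have := hmp.setLIntegral_comp_preimage_emb hemb f (Set.Ioo (-m) 0)
    rw [hpre] at this
    rw [← this]
    refine setLIntegral_congr_fun measurableSet_Ioo ?_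
    intro x hx
    exact heven x ⟨by linarith [hx.1, hma], by linarith [hx.2, hma]⟩
  have hIco : ∫⁻ x in Set.Ico 0 m, f x ∂volume = ∫⁻ x in Set.Ioc (0 : ℝ) m, f x ∂volume := by
    rw [restrict_Ico_eq_restrict_Icc, ← restrict_Ioc_eq_restrict_Icc]
  have hIoo : ∫⁻ x in Set.Ioo (0 : ℝ) m, f x ∂volume = ∫⁻ x in Set.Ioc (0 : ℝ) m, f x ∂volume := by
    rw [restrict_Ioo_eq_restrict_Ioc]
  calc ∫⁻ x in E, f x ∂volume ≤ ∫⁻ x in I, f x ∂volume := step2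
    _ = ∫⁻ x in Set.Ioc (0:ℝ) m, f x ∂volume + ∫⁻ x in Set.Ioc (0:ℝ) m, f x ∂volume := by
        rw [hsplit, hneg, hIco, hIoo]
    _ = 2 * ∫⁻ t in Set.Ioc (0 : ℝ) m, f t ∂volume := (two_mul _).symm
end
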